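/- For H(x,y,p,q) := 3 q² p/(p² + 1), the Wünschmann invariant W(H) := 9 D D H_q − 27 D H_p − 18 H_q D H_q + 18 H_q H_p + 4 H_q³ + 54 H_y vanishes identically on ℝ⁴, where D := ∂_x + p∂_y + q∂_p + H∂_q. -/

import Mathlib

/-- Partial derivative in the `x` slot. -/
noncomputable def px (G : ℝ → ℝ → ℝ → ℝ → ℝ) : ℝ → ℝ → ℝ → ℝ → ℝ :=
  fun x y p q => deriv (fun s => G s y p q) x

/-- Partial derivative in the `y` slot. -/
noncomputable def py (G : ℝ → ℝ → ℝ → ℝ → ℝ) : ℝ → ℝ → ℝ → ℝ → ℝ :=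
  fun x y p q => deriv (fun s => G x s p q) y

/-- Partial derivative in the `p` slot. -/
noncomputable def pp (G : ℝ → ℝ → ℝ → ℝ → ℝ) : ℝ → ℝ → ℝ → ℝ → ℝ :=
  fun x y p q => deriv (fun s => G x y s q) p

/-- Partial derivative in the `q` slot. -/
noncomputable def pq (G : ℝ → ℝ → ℝ → ℝ → ℝ) : ℝ → ℝ → ℝ → ℝ → ℝ :=
  fun x y p q => deriv (fun s => G x y p s) q

/-- The total differentiation operator `D = ∂x + p ∂y + q ∂p + H ∂q` associated
to the third-order ODE `y''' = H(x,y,y',y'')`. -/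
noncomputable def DOp (H G : ℝ → ℝ → ℝ → ℝ → ℝ) : ℝ → ℝ → ℝ → ℝ → ℝ :=
  fun x y p q =>
    px G x y p q + p * py G x y p q + q * pp G x y p q + H x y p q * pq G x y p q

/-- The Wünschmann invariant
`W(H) = 9 D D H_q − 27 D H_p − 18 H_q D H_q + 18 H_q H_p + 4 H_q³ + 54 H_y`. -/
noncomputable def Wun (H : ℝ → ℝ → ℝ → ℝ → ℝ) : ℝ → ℝ → ℝ → ℝ → ℝ :=
  fun x y p q =>
    9 * DOp H (DOp H (pq H)) x y p q
      - 27 * DOp H (pp H) x y p q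
      - 18 * pq H x y p q * DOp H (pq H) x y p q
      + 18 * pq H x y p q * pp H x y p q
      + 4 * (pq H x y p q) ^ 3
      + 54 * py H x y p q

/-! For `H = q² h(p)` the operator `D` raises the degree in `q` by one on functions
`qⁿ u(p)`, namely `D (qⁿ u) = qⁿ⁺¹ (u' + n h u)`. Hence every term of `W(H)` is `q³` times
an expression in `h, h', h''`, and `W(H) = -q³ (9 h'' + 18 h h' + 4 h³)`. For
`h = 3p/(p² + 1)` the bracket vanishes identically. -/

theorem px_indep_eq_zero (g : ℝ → ℝ → ℝ → ℝ) : px (fun _ y p q => g y p q) = 0 := by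
  funext x y p q
  simp [px]

theorem py_indep_eq_zero (g : ℝ → ℝ → ℝ → ℝ) : py (fun x _ p q => g x p q) = 0 := by
  funext x y p q
  simp [py]

theorem pq_pow_mul (n : ℕ) (u : ℝ → ℝ) :
    pq (fun _ _ p q => q ^ n * u p) = fun _ _ p q => n * q ^ (n - 1) * u p := by
  funext x y p q
  exact ((hasDerivAt_pow n q).mul_const (u p)).deriv

section

variable {u u' : ℝ → ℝ}

theorem pp_pow_mul (n : ℕ) (hu : ∀ p, HasDerivAt u (u' p) p) :
    pp (fun _ _ p q => q ^ n * u p) = fun _ _ p q => q ^ n * u' p := by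
  funext x y p q
  exact ((hu p).const_mul (q ^ n)).deriv

theorem DOp_sq_mul_pow_mul (h : ℝ → ℝ) (n : ℕ) (hu : ∀ p, HasDerivAt u (u' p) p) :
    DOp (fun _ _ p q => q ^ 2 * h p) (fun _ _ p q => q ^ n * u p) =
      fun _ _ p q => q ^ (n + 1) * (u' p + n * h p * u p) := by
  funext x y p q
  simp only [DOp, px_indep_eq_zero, py_indep_eq_zero, pp_pow_mul n hu, pq_pow_mul,
    Pi.zero_apply]
  cases n with
  | zero => simp
  | succ k => push_cast; ring

end

theorem Wun_sq_mul {h h' h'' : ℝ → ℝ} (hh : ∀ p, HasDerivAt h (h' p) p)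
    (hh' : ∀ p, HasDerivAt h' (h'' p) p) :
    Wun (fun _ _ p q => q ^ 2 * h p) =
      fun _ _ p q => -q ^ 3 * (9 * h'' p + 18 * h p * h' p + 4 * h p ^ 3) := by
  have hHy : py (fun _ _ p q => q ^ 2 * h p) = 0 := py_indep_eq_zero _
  have hHp : pp (fun _ _ p q => q ^ 2 * h p) = fun _ _ p q => q ^ 2 * h' p := pp_pow_mul 2 hh
  have hHq : pq (fun _ _ p q => q ^ 2 * h p) = fun _ _ p q => q ^ 1 * (2 * h p) := by
    rw [pq_pow_mul]
    funext x y p q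
    push_cast
    ring
  have hDHq : DOp (fun _ _ p q => q ^ 2 * h p) (fun _ _ p q => q ^ 1 * (2 * h p)) =
      fun _ _ p q => q ^ 2 * (2 * h' p + 2 * h p ^ 2) := by
    rw [DOp_sq_mul_pow_mul h 1 fun p => (hh p).const_mul 2]
    funext x y p q
    push_cast
    ring
  have hDDHq :
      DOp (fun _ _ p q => q ^ 2 * h p) (fun _ _ p q => q ^ 2 * (2 * h' p + 2 * h p ^ 2)) =
        fun _ _ p q => q ^ 3 * (2 * h'' p + 8 * h p * h' p + 4 * h p ^ 3) := by
    have hu (p : ℝ) :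
        HasDerivAt (fun p => 2 * h' p + 2 * h p ^ 2) (2 * h'' p + 4 * h p * h' p) p := by
      refine (((hh' p).const_mul 2).fun_add (((hh p).fun_pow 2).const_mul 2)).congr_deriv ?_
      push_cast
      ring
    rw [DOp_sq_mul_pow_mul h 2 hu]
    funext x y p q
    push_cast
    ring
  have hDHp : DOp (fun _ _ p q => q ^ 2 * h p) (fun _ _ p q => q ^ 2 * h' p) =
      fun _ _ p q => q ^ 3 * (h'' p + 2 * h p * h' p) := by
    rw [DOp_sq_mul_pow_mul h 2 hh']
    funext x y p q
    push_cast
    ring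
  funext x y p q
  simp only [Wun]
  rw [hHq, hDHq, hDDHq, hHp, hDHp, hHy]
  simp only [Pi.zero_apply]
  ring

/-- The Wünschmann invariant of `H = 3 q² p/(p² + 1)` vanishes identically. -/
theorem wunschmann_example_q2p_over_p2_add_one :
    ∀ x y p q : ℝ,
      Wun (fun _ _ p q => 3 * q ^ 2 * p / (p ^ 2 + 1)) x y p q = 0 := by
  intro x y p q
  have hden (p : ℝ) : p ^ 2 + 1 ≠ 0 := by positivity
  have hh (p : ℝ) :
      HasDerivAt (fun p => 3 * p / (p ^ 2 + 1)) (3 * (1 - p ^ 2) / (p ^ 2 + 1) ^ 2) p := by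
    refine (((hasDerivAt_id' p).const_mul 3).div ((hasDerivAt_pow 2 p).add_const 1)
      (hden p)).congr_deriv ?_
    field_simp
    ring
  have hh' (p : ℝ) : HasDerivAt (fun p => 3 * (1 - p ^ 2) / (p ^ 2 + 1) ^ 2)
      (6 * p * (p ^ 2 - 3) / (p ^ 2 + 1) ^ 3) p := by
    refine ((((hasDerivAt_pow 2 p).const_sub 1).const_mul 3).div
      (((hasDerivAt_pow 2 p).add_const 1).fun_pow 2) (pow_ne_zero 2 (hden p))).congr_deriv ?_
    field_simp
    ring
  have hH : (fun _ _ p q => 3 * q ^ 2 * p / (p ^ 2 + 1) : ℝ → ℝ → ℝ → ℝ → ℝ) =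
      fun _ _ p q => q ^ 2 * (3 * p / (p ^ 2 + 1)) := by
    funext x y p q
    ring
  rw [hH, Wun_sq_mul hh hh']
  field_simp
  ring
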